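/- If C = A(φ) Q A(φ)^H with Q positive definite and A(φ) full column rank L < N, and ψ is an angle with steering generator w distinct from all z_l, then a(ψ) is not orthogonal to the null space of C; i.e., there exists a null-space vector e of C with e^H a(ψ) ≠ 0. -/

import Mathlib

open Matrix ComplexOrder

/-!
Let `p = ∏ₗ (X - z_l)`, of degree `L < N`, and let `e` be the conjugate of its coefficient
vector. Then `eᴴ (1, ζ, …, ζ^{N-1}) = p(ζ)` for every `ζ`, so `Aᴴ e = 0`, whence `C e = 0`,
while `eᴴ a(ψ) = p(w) ≠ 0` because `w` is not a root of `p`.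
-/

open Polynomial

theorem Polynomial.eval_eq_sum_fin {R : Type*} [Semiring R] {p : R[X]} {N : ℕ}
    (hp : p.natDegree < N) (x : R) :
    p.eval x = ∑ n : Fin N, p.coeff n * x ^ (n : ℕ) := by
  rw [eval_eq_sum_range' hp, Fin.sum_univ_eq_sum_range (fun n => p.coeff n * x ^ n)]

theorem Matrix.conjTranspose_vandermonde_mulVec_star_coeff {R : Type*} [CommSemiring R]
    [StarRing R] {N L : ℕ} (z : Fin L → R) (A : Matrix (Fin N) (Fin L) R)
    (hA : ∀ (n : Fin N) (l : Fin L), A n l = z l ^ (n : ℕ)) {p : R[X]} (hp : p.natDegree < N) :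
    Aᴴ *ᵥ (fun n : Fin N => star (p.coeff n)) = fun l => star (p.eval (z l)) := by
  funext l
  simp only [mulVec, dotProduct, conjTranspose_apply, hA, eval_eq_sum_fin hp, star_sum,
    star_mul, mul_comm]

theorem stmt14_general (N L : ℕ) (hLN : L < N)
    (z : Fin L → ℂ)
    (w : ℂ)
    (hw : ∀ l, w ≠ z l)
    (A : Matrix (Fin N) (Fin L) ℂ)
    (hA : ∀ (n : Fin N) (l : Fin L), A n l = z l ^ (n : ℕ))
    (Q : Matrix (Fin L) (Fin L) ℂ)
    (C : Matrix (Fin N) (Fin N) ℂ)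
    (hC : C = A * Q * Aᴴ) :
    ∃ e : Fin N → ℂ, C.mulVec e = 0 ∧ (∑ n : Fin N, star (e n) * w ^ (n : ℕ)) ≠ 0 := by
  set p : ℂ[X] := ∏ l, (X - Polynomial.C (z l))
  have hdeg : p.natDegree < N := by simpa [p] using hLN
  refine ⟨fun n => star (p.coeff n), ?_, ?_⟩
  · have hAe : Aᴴ *ᵥ (fun n : Fin N => star (p.coeff n)) = 0 := by
      rw [conjTranspose_vandermonde_mulVec_star_coeff z A hA hdeg]
      funext l
      simp [p, eval_prod, Finset.prod_eq_zero (Finset.mem_univ l)]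
    rw [hC, ← mulVec_mulVec, ← mulVec_mulVec, hAe, mulVec_zero, mulVec_zero]
  · simp only [star_star, ← eval_eq_sum_fin hdeg]
    simpa [p, eval_prod, Finset.prod_ne_zero_iff, sub_eq_zero] using hw

/-- MUSIC identifiability: if `C = A(φ) Q A(φ)ᴴ` with `Q` positive definite, the
generators `z_l` distinct unit complex numbers, `L < N`, and `w` a unit complex number
distinct from all `z_l`, then the steering vector `a(ψ) = (1, w, …, w^{N-1})` is not
orthogonal to the null space of `C`: some null-space vector `e` of `C` has
`eᴴ a(ψ) ≠ 0`. -/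
theorem stmt14 (N L : ℕ) (hLN : L < N)
    (z : Fin L → ℂ)
    (hzunit : ∀ l, ‖z l‖ = 1)
    (hzdist : ∀ l l', l ≠ l' → z l ≠ z l')
    (w : ℂ) (hwunit : ‖w‖ = 1)
    (hw : ∀ l, w ≠ z l)
    (A : Matrix (Fin N) (Fin L) ℂ)
    (hA : ∀ (n : Fin N) (l : Fin L), A n l = z l ^ (n : ℕ))
    (Q : Matrix (Fin L) (Fin L) ℂ)
    (hQ : Q.PosDef)
    (C : Matrix (Fin N) (Fin N) ℂ)
    (hC : C = A * Q * Aᴴ) :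
    ∃ e : Fin N → ℂ, C.mulVec e = 0 ∧ (∑ n : Fin N, star (e n) * w ^ (n : ℕ)) ≠ 0 :=
  stmt14_general N L hLN z w hw A hA Q C hC
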